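/- Let 𝔉 : Ω → ℝ be locally Lipschitz and x ∈ Ω. Then: (i) 0 ∈ ∂_C^−𝔉(x) if and only if 𝔉_+^∘(x;h) ≥ 0 for every h ∈ X; (ii) 0 ∈ ∂_C^+𝔉(x) if and only if 𝔉_−^∘(x;h) ≤ 0 for every h ∈ X; (iii) if 0 ∈ ∂_C^−𝔉(x) ∪ ∂_C^+𝔉(x), then 𝔉_+^∘(x;h)·𝔉_−^∘(x;h) ≤ 0 for every h ∈ X; (iv) if 𝔉_+^∘(x;h)·𝔉_−^∘(x;h) ≤ 0 for every h ∈ X, then 0 belongs to the weak*-closed convex hull of ∂_C^−𝔉(x) ∪ ∂_C^+𝔉(x). -/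

import Mathlib

open Filter Topology Set

variable {X : Type*} [NormedAddCommGroup X] [NormedSpace ℝ X]

/-- Clarke's generalized upper directional derivative
`𝔉_+^∘(x;h) = limsup_{y→x, t↓0} (𝔉(y+th) − 𝔉(y))/t`. -/
noncomputable def clarkeUpper (F : X → ℝ) (x h : X) : ℝ :=
  Filter.limsup (fun p : X × ℝ => (F (p.1 + p.2 • h) - F p.1) / p.2)
    ((𝓝 x) ×ˢ (𝓝[>] (0:ℝ)))

/-- Clarke's generalized lower directional derivative
`𝔉_−^∘(x;h) = liminf_{y→x, t↓0} (𝔉(y+th) − 𝔉(y))/t`. -/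
noncomputable def clarkeLower (F : X → ℝ) (x h : X) : ℝ :=
  Filter.liminf (fun p : X × ℝ => (F (p.1 + p.2 • h) - F p.1) / p.2)
    ((𝓝 x) ×ˢ (𝓝[>] (0:ℝ)))

/-- Clarke subdifferential, as a subset of the dual with the weak* topology. -/
def clarkeSubdiffW (F : X → ℝ) (x : X) : Set (WeakDual ℝ X) :=
  {ζ | ∀ h : X, ζ h ≤ clarkeUpper F x h}

/-- Clarke superdifferential, as a subset of the dual with the weak* topology. -/
def clarkeSuperdiffW (F : X → ℝ) (x : X) : Set (WeakDual ℝ X) :=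
  {ζ | ∀ h : X, clarkeLower F x h ≤ ζ h}

section Aux

variable (F : X → ℝ)

/-- The shift map `(y,t) ↦ (y + t•h, t)` maps the filter `𝓝 x ×ˢ 𝓝[>] 0` into itself. -/
lemma shift_tendsto (x h : X) :
    Filter.Tendsto (fun p : X × ℝ => (p.1 + p.2 • h, p.2))
      ((𝓝 x) ×ˢ (𝓝[>] (0:ℝ))) ((𝓝 x) ×ˢ (𝓝[>] (0:ℝ))) := by
  apply Filter.Tendsto.prodMk
  · have h1 : Filter.Tendsto (fun p : X × ℝ => p.1) ((𝓝 x) ×ˢ (𝓝[>] (0:ℝ))) (𝓝 x) :=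
      tendsto_fst
    have h2 : Filter.Tendsto (fun p : X × ℝ => p.2) ((𝓝 x) ×ˢ (𝓝[>] (0:ℝ))) (𝓝 (0:ℝ)) :=
      tendsto_snd.mono_right nhdsWithin_le_nhds
    have h3 : Filter.Tendsto (fun p : X × ℝ => p.2 • h) ((𝓝 x) ×ˢ (𝓝[>] (0:ℝ))) (𝓝 (0:X)) := by
      have := h2.smul_const h
      simpa using this
    simpa using h1.add h3
  · exact tendsto_snd

/-- The shift map preserves the filter `𝓝 x ×ˢ 𝓝[>] 0`. -/
lemma shift_map_eq (x h : X) :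
    Filter.map (fun p : X × ℝ => (p.1 + p.2 • h, p.2)) ((𝓝 x) ×ˢ (𝓝[>] (0:ℝ)))
      = (𝓝 x) ×ˢ (𝓝[>] (0:ℝ)) := by
  refine le_antisymm (shift_tendsto x h) ?_
  have h2 := Filter.map_mono (m := fun p : X × ℝ => (p.1 + p.2 • h, p.2)) (shift_tendsto x (-h))
  rw [Filter.map_map] at h2
  have : ((fun p : X × ℝ => (p.1 + p.2 • h, p.2)) ∘ fun p : X × ℝ => (p.1 + p.2 • (-h), p.2))
      = id := by
    funext p
    simp [Function.comp, add_assoc, smul_neg]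
  rw [this, Filter.map_id] at h2
  exact h2

/-- In `ℝ`, `liminf (-u) = - limsup u` (unconditionally, thanks to junk values). -/
lemma real_liminf_neg {α : Type*} (l : Filter α) (u : α → ℝ) :
    Filter.liminf (fun a => -u a) l = -Filter.limsup u l := by
  rw [Filter.liminf_eq, Filter.limsup_eq]
  have hset : { a : ℝ | ∀ᶠ n in l, a ≤ -u n } = -{ a : ℝ | ∀ᶠ n in l, u n ≤ a } := by
    ext a
    simp only [Set.mem_neg, Set.mem_setOf_eq]
    constructor
    · intro ha; exact ha.mono fun n hn => by linarith
    · intro ha; exact ha.mono fun n hn => by linarith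
  rw [hset, Real.sInf_def, neg_neg]

/-- Key identity: `𝔉_−^∘(x;h) = -𝔉_+^∘(x;-h)`. -/
lemma clarkeLower_eq_neg_clarkeUpper (x h : X) :
    clarkeLower F x h = -clarkeUpper F x (-h) := by
  unfold clarkeLower clarkeUpper
  set l := (𝓝 x) ×ˢ (𝓝[>] (0:ℝ)) with hl
  set g : X × ℝ → ℝ := fun p => (F (p.1 + p.2 • (-h)) - F p.1) / p.2 with hg
  have hfun : (fun p : X × ℝ => (F (p.1 + p.2 • h) - F p.1) / p.2)
      = (fun p => -g p) ∘ (fun p : X × ℝ => (p.1 + p.2 • h, p.2)) := by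
    funext p
    simp only [Function.comp, hg, smul_neg, add_assoc]
    rw [add_neg_cancel, add_zero, ← neg_div, neg_sub]
  have hmap : Filter.liminf ((fun p => -g p) ∘ (fun p : X × ℝ => (p.1 + p.2 • h, p.2))) l
      = Filter.liminf (fun p => -g p)
          (Filter.map (fun p : X × ℝ => (p.1 + p.2 • h, p.2)) l) := by
    rw [Filter.liminf_eq, Filter.liminf_eq]
    congr 1
  rw [hfun, hmap, hl, shift_map_eq x h, real_liminf_neg]

/-- Local Lipschitz continuity gives local boundedness of the difference quotients. -/
lemma quot_bounded {K : NNReal} {s : Set X} (x : X) (hs : s ∈ 𝓝 x)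
    (hlips : LipschitzOnWith K F s) (h : X) :
    ∀ᶠ p : X × ℝ in (𝓝 x) ×ˢ (𝓝[>] (0:ℝ)),
      |(F (p.1 + p.2 • h) - F p.1) / p.2| ≤ (K : ℝ) * ‖h‖ := by
  obtain ⟨ε, hε, hball⟩ := Metric.mem_nhds_iff.1 hs
  set δ : ℝ := ε / (2 * (‖h‖ + 1)) with hδ
  have hδpos : 0 < δ := by
    apply div_pos hε
    positivity
  have hb1 : ∀ᶠ y in 𝓝 x, y ∈ Metric.ball x (ε / 2) := Metric.ball_mem_nhds x (by linarith)
  have hb2 : ∀ᶠ t in 𝓝[>] (0:ℝ), t ∈ Set.Ioo (0:ℝ) δ := Ioo_mem_nhdsGT hδpos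
  have h1 : ∀ᶠ p : X × ℝ in (𝓝 x) ×ˢ (𝓝[>] (0:ℝ)), p.1 ∈ Metric.ball x (ε / 2) :=
    hb1.prod_inl _
  have h2 : ∀ᶠ p : X × ℝ in (𝓝 x) ×ˢ (𝓝[>] (0:ℝ)), p.2 ∈ Set.Ioo (0:ℝ) δ :=
    hb2.prod_inr _
  filter_upwards [h1, h2] with p hp1 hp2
  obtain ⟨hp2a, hp2b⟩ := hp2
  have hmem1 : p.1 ∈ s := hball (Metric.ball_subset_ball (by linarith) hp1)
  have hnorm : ‖p.2 • h‖ = p.2 * ‖h‖ := by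
    rw [norm_smul, Real.norm_eq_abs, abs_of_pos hp2a]
  have hmem2 : p.1 + p.2 • h ∈ s := by
    apply hball
    rw [Metric.mem_ball, dist_eq_norm] at hp1 ⊢
    have : ‖p.1 + p.2 • h - x‖ ≤ ‖p.1 - x‖ + ‖p.2 • h‖ := by
      have : p.1 + p.2 • h - x = (p.1 - x) + p.2 • h := by abel
      rw [this]; exact norm_add_le _ _
    have hsmall : ‖p.2 • h‖ ≤ ε / 2 := by
      rw [hnorm]
      have hδle : δ * (‖h‖ + 1) = ε / 2 := by
        rw [hδ]
        field_simp
      calc p.2 * ‖h‖ ≤ δ * (‖h‖ + 1) := by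
            apply mul_le_mul hp2b.le (by linarith) (norm_nonneg h) hδpos.le
        _ = ε / 2 := hδle
    linarith
  have hlipest : |F (p.1 + p.2 • h) - F p.1| ≤ (K : ℝ) * (p.2 * ‖h‖) := by
    have := hlips.dist_le_mul _ hmem2 _ hmem1
    rw [Real.dist_eq, dist_eq_norm] at this
    have heq : p.1 + p.2 • h - p.1 = p.2 • h := by abel
    rw [heq, hnorm] at this
    exact this
  rw [abs_div, abs_of_pos hp2a]
  rw [div_le_iff₀ hp2a]
  calc |F (p.1 + p.2 • h) - F p.1| ≤ (K : ℝ) * (p.2 * ‖h‖) := hlipest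
    _ = (K : ℝ) * ‖h‖ * p.2 := by ring

/-- `𝔉_−^∘(x;h) ≤ 𝔉_+^∘(x;h)` under local Lipschitz continuity. -/
lemma clarkeLower_le_clarkeUpper {K : NNReal} {s : Set X} (x : X) (hs : s ∈ 𝓝 x)
    (hlips : LipschitzOnWith K F s) (h : X) :
    clarkeLower F x h ≤ clarkeUpper F x h := by
  have hb := quot_bounded F x hs hlips h
  haveI : ((𝓝 x) ×ˢ (𝓝[>] (0:ℝ))).NeBot := by
    apply Filter.prod_neBot.2
    exact ⟨nhds_neBot, nhdsGT_neBot 0⟩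
  apply Filter.liminf_le_limsup
  · exact ⟨(K : ℝ) * ‖h‖, hb.mono fun p hp => (abs_le.1 hp).2⟩
  · exact ⟨-((K : ℝ) * ‖h‖), hb.mono fun p hp => (abs_le.1 hp).1⟩

end Aux

/-- **criticality via Clarke sub/superdifferentials.**
Let `𝔉 : Ω → ℝ` be locally Lipschitz and `x ∈ Ω`.  Then:
(i) `0 ∈ ∂_C^−𝔉(x) ↔ ∀ h, 𝔉_+^∘(x;h) ≥ 0`;
(ii) `0 ∈ ∂_C^+𝔉(x) ↔ ∀ h, 𝔉_−^∘(x;h) ≤ 0`;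
(iii) if `0 ∈ ∂_C^−𝔉(x) ∪ ∂_C^+𝔉(x)` then `𝔉_+^∘(x;h)·𝔉_−^∘(x;h) ≤ 0` for all `h`;
(iv) if `𝔉_+^∘(x;h)·𝔉_−^∘(x;h) ≤ 0` for all `h`, then `0` belongs to the weak*-closed
convex hull of `∂_C^−𝔉(x) ∪ ∂_C^+𝔉(x)`. -/
theorem criticality_clarke_subdifferentials
    [CompleteSpace X] {Ω : Set X} (hΩ : IsOpen Ω)
    (F : X → ℝ)
    (hlip : ∀ z ∈ Ω, ∃ K : NNReal, ∃ s ∈ 𝓝 z, LipschitzOnWith K F s)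
    (x : X) (hx : x ∈ Ω) :
    ((0 : WeakDual ℝ X) ∈ clarkeSubdiffW F x ↔ ∀ h : X, 0 ≤ clarkeUpper F x h) ∧
    ((0 : WeakDual ℝ X) ∈ clarkeSuperdiffW F x ↔ ∀ h : X, clarkeLower F x h ≤ 0) ∧
    ((0 : WeakDual ℝ X) ∈ clarkeSubdiffW F x ∪ clarkeSuperdiffW F x →
      ∀ h : X, clarkeUpper F x h * clarkeLower F x h ≤ 0) ∧
    ((∀ h : X, clarkeUpper F x h * clarkeLower F x h ≤ 0) →
      (0 : WeakDual ℝ X) ∈ closure (convexHull ℝ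
        (clarkeSubdiffW F x ∪ clarkeSuperdiffW F x))) := by
  obtain ⟨K, s, hs, hlips⟩ := hlip x hx
  have hle : ∀ h : X, clarkeLower F x h ≤ clarkeUpper F x h :=
    clarkeLower_le_clarkeUpper F x hs hlips
  have hzero : ∀ h : X, (0 : WeakDual ℝ X) h = 0 := fun _ => rfl
  have hi : (0 : WeakDual ℝ X) ∈ clarkeSubdiffW F x ↔ ∀ h : X, 0 ≤ clarkeUpper F x h := by
    simp [clarkeSubdiffW, hzero]
  have hii : (0 : WeakDual ℝ X) ∈ clarkeSuperdiffW F x ↔ ∀ h : X, clarkeLower F x h ≤ 0 := by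
    simp [clarkeSuperdiffW, hzero]
  refine ⟨hi, hii, ?_, ?_⟩
  · rintro (h0 | h0) h
    · -- 0 in subdifferential : all upper derivatives nonneg
      have hup : 0 ≤ clarkeUpper F x h := by simpa [hzero] using h0 h
      have hlow : clarkeLower F x h ≤ 0 := by
        rw [clarkeLower_eq_neg_clarkeUpper]
        have : 0 ≤ clarkeUpper F x (-h) := by simpa [hzero] using h0 (-h)
        linarith
      exact mul_nonpos_iff.2 (Or.inl ⟨hup, hlow⟩)
    · -- 0 in superdifferential : all lower derivatives nonpos
      have hlow : clarkeLower F x h ≤ 0 := by simpa [hzero] using h0 h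
      have hup : 0 ≤ clarkeUpper F x h := by
        have h1 : clarkeLower F x (-h) ≤ 0 := by simpa [hzero] using h0 (-h)
        have h2 : clarkeLower F x (-h) = -clarkeUpper F x (-(-h)) :=
          clarkeLower_eq_neg_clarkeUpper F x (-h)
        rw [neg_neg] at h2
        linarith
      exact mul_nonpos_iff.2 (Or.inl ⟨hup, hlow⟩)
  · intro hprod
    have hup : ∀ h : X, 0 ≤ clarkeUpper F x h := by
      intro h
      by_contra hneg
      push_neg at hneg
      have h1 : clarkeLower F x h < 0 := lt_of_le_of_lt (hle h) hneg
      have h2 : 0 < clarkeUpper F x h * clarkeLower F x h :=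
        mul_pos_of_neg_of_neg hneg h1
      linarith [hprod h]
    have hmem : (0 : WeakDual ℝ X) ∈ clarkeSubdiffW F x := hi.2 hup
    exact subset_closure (subset_convexHull ℝ _ (Or.inl hmem))
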